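/- arXiv:0811.1553 — 2 statements merged into one kernel-verified Lean document; each statement's English description precedes it below -/
import Mathlib

section
/- Fix an integer L ≥ 2 and a real number x with 0 ≤ x < L. Let (B_m) and (R_m) be sequences of positive integers with B_m → ∞ and (R_m · L)/B_m → x as m → ∞. Then (B_m/L) · C(B_m − R_m − 1, L − 2)/C(B_m − 1, L − 1) → (1 − 1/L)·(1 − x/L)^{L−2} as m → ∞. -/
open Filter Topology

/-!
Writing `C(a, k) = a.descFactorial k / k!`, the quantity is
`(L - 1)/L · (C / B ^ (L - 2)) / (D / B ^ (L - 1))` with `C = (B - R - 1).descFactorial (L - 2)`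
and `D = (B - 1).descFactorial (L - 1)`. A falling factorial `a.descFactorial k` divided by `B ^ k`
is the product of the `k` factors `(a - j) / B`, each of which tends to `lim a / B`; here those
limits are `1 - x / L` and `1`.
-/

theorem Nat.cast_descFactorial_eq_prod_range {S : Type*} [CommRing S] (n k : ℕ) :
    (n.descFactorial k : S) = ∏ j ∈ Finset.range k, ((n : S) - j) := by
  rw [← descPochhammer_eval_eq_descFactorial, descPochhammer_eval_eq_prod_range]

section
variable {ι : Type*} {l : Filter ι}

theorem tendsto_descFactorial_div_pow (k : ℕ) {a : ι → ℕ} {c : ι → ℝ} {t : ℝ}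
    (hc : Tendsto c l atTop) (ha : Tendsto (fun i => (a i : ℝ) / c i) l (𝓝 t)) :
    Tendsto (fun i => ((a i).descFactorial k : ℝ) / c i ^ k) l (𝓝 (t ^ k)) := by
  have hfactor (j : ℕ) : Tendsto (fun i => ((a i : ℝ) - j) / c i) l (𝓝 t) := by
    simpa [sub_div] using ha.sub (tendsto_const_nhds.div_atTop hc)
  simpa [Nat.cast_descFactorial_eq_prod_range, Finset.prod_div_distrib] using
    tendsto_finsetProd (Finset.range k) fun j _ => hfactor j

theorem tendsto_natCast_sub_div {a b : ι → ℕ} {c : ι → ℝ} {s t : ℝ}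
    (hba : ∀ᶠ i in l, b i ≤ a i) (ha : Tendsto (fun i => (a i : ℝ) / c i) l (𝓝 s))
    (hb : Tendsto (fun i => (b i : ℝ) / c i) l (𝓝 t)) :
    Tendsto (fun i => ((a i - b i : ℕ) : ℝ) / c i) l (𝓝 (s - t)) :=
  (ha.sub hb).congr' <| hba.mono fun i h => by simp only [Nat.cast_sub h, sub_div]

end

theorem mul_cast_choose_div_choose_succ (a n k : ℕ) {c : ℝ} (hc : c ≠ 0) :
    c * ((a.choose k : ℝ) / n.choose (k + 1)) =
      (k + 1) * ((a.descFactorial k / c ^ k) / (n.descFactorial (k + 1) / c ^ (k + 1))) := by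
  have hk : (k.factorial : ℝ) ≠ 0 := by positivity
  simp only [Nat.descFactorial_eq_factorial_mul_choose, Nat.factorial_succ, Nat.cast_mul]
  push_cast
  field_simp
  ring

theorem neg_hypergeom_density_limit_fixed_L_general (L : ℕ) (hL : 2 ≤ L) (x : ℝ)
    (hxL : x < L) (B R : ℕ → ℕ)
    (hBtop : Tendsto B atTop atTop)
    (hRL : Tendsto (fun m => ((R m : ℝ) * L) / (B m : ℝ)) atTop (nhds x)) :
    Tendsto (fun m => ((B m : ℝ) / L) *
        (((B m - R m - 1).choose (L - 2) : ℝ) / ((B m - 1).choose (L - 1) : ℝ)))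
      atTop (nhds ((1 - 1 / (L : ℝ)) * (1 - x / L) ^ (L - 2))) := by
  have hB : Tendsto (fun m => (B m : ℝ)) atTop atTop := tendsto_natCast_atTop_atTop.comp hBtop
  have hBB : Tendsto (fun m => (B m : ℝ) / B m) atTop (𝓝 1) :=
    tendsto_const_nhds.congr' <| (hB.eventually_ne_atTop 0).mono fun m h => (div_self h).symm
  have hRB : Tendsto (fun m => ((R m + 1 : ℕ) : ℝ) / B m) atTop (𝓝 (x / L + 0)) := by
    refine ((hRL.div_const _).add (tendsto_const_nhds (x := (1 : ℝ)) |>.div_atTop hB)).congr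
      fun m => ?_
    push_cast
    field_simp
  have hR_succ_le : ∀ᶠ m in atTop, R m + 1 ≤ B m := by
    filter_upwards [hRL.eventually_lt_const hxL, hB.eventually_gt_atTop 0] with m hlt hpos
    rw [div_lt_iff₀ hpos, mul_comm] at hlt
    exact_mod_cast lt_of_mul_lt_mul_left hlt (by positivity)
  have hnum := tendsto_descFactorial_div_pow (L - 2) hB (tendsto_natCast_sub_div hR_succ_le hBB hRB)
  have hden := tendsto_descFactorial_div_pow (L - 1) hB
    (tendsto_natCast_sub_div (hBtop.eventually_ge_atTop 1) hBB (tendsto_const_nhds.div_atTop hB))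
  have hk : L - 1 = L - 2 + 1 := by omega
  have hvalue : (1 - 1 / (L : ℝ)) * (1 - x / L) ^ (L - 2) =
      (((L - 2 : ℕ) : ℝ) + 1) / L * ((1 - (x / L + 0)) ^ (L - 2) / (1 - 0) ^ (L - 1)) := by
    rw [← Nat.cast_add_one, ← hk, Nat.cast_sub (by omega : 1 ≤ L)]
    field_simp
    simp
  rw [hvalue]
  refine ((hnum.div hden (by norm_num)).const_mul _).congr' ?_
  filter_upwards [hB.eventually_ne_atTop 0] with m hm
  rw [Pi.div_apply, Nat.sub_sub, hk, div_mul_eq_mul_div (B m : ℝ),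
    mul_cast_choose_div_choose_succ _ _ _ hm]
  ring

/-- Fixed-`L` limit of the negative hypergeometric law: if `B_m → ∞` and
`R_m · L / B_m → x` with `0 ≤ x < L`, then
`(B_m/L) · C(B_m - R_m - 1, L-2) / C(B_m - 1, L-1) → (1 - 1/L)·(1 - x/L)^(L-2)`. -/
theorem neg_hypergeom_density_limit_fixed_L (L : ℕ) (hL : 2 ≤ L) (x : ℝ)
    (hx0 : 0 ≤ x) (hxL : x < L) (B R : ℕ → ℕ)
    (hBpos : ∀ m, 0 < B m) (hRpos : ∀ m, 0 < R m)
    (hBtop : Tendsto B atTop atTop)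
    (hRL : Tendsto (fun m => ((R m : ℝ) * L) / (B m : ℝ)) atTop (nhds x)) :
    Tendsto (fun m => ((B m : ℝ) / L) *
        (((B m - R m - 1).choose (L - 2) : ℝ) / ((B m - 1).choose (L - 1) : ℝ)))
      atTop (nhds ((1 - 1 / (L : ℝ)) * (1 - x / L) ^ (L - 2))) :=
  neg_hypergeom_density_limit_fixed_L_general L hL x hxL B R hBtop hRL
end

section
/- Let (B_m), (L_m), (R_m) be sequences of positive integers with L_m → ∞, L_m/B_m → 0, and (R_m · L_m)/B_m → x for some real x ≥ 0, as m → ∞. Then (B_m/L_m) · C(B_m − R_m − 1, L_m − 2)/C(B_m − 1, L_m − 1) → e^{−x} as m → ∞. -/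
/-!
Since `C(B-1, L-1) = (B-1)/(L-1) · C(B-2, L-2)`, the quantity is `B(L-1) / (L(B-1)) → 1` times
`C(n, k) / C(N, k) = ∏_{i<k} (n-i)/(N-i)` with `n = B-R-1`, `N = B-2`, `k = L-2`. Every factor lies
between `1 - (R-1)/(B-L+1)` and `1 - (R-1)/(B-2)`, so the ratio is squeezed between two powers
`(1 - a)^k` with `k a → x`, and both tend to `e^{-x}` because `-a/(1-a) ≤ log (1-a) ≤ -a`.
-/

open Filter Topology Finset

namespace Nat

theorem cast_descFactorial_eq_prod_range_s4 {R : Type*} [CommRing R] (n k : ℕ) :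
    (n.descFactorial k : R) = ∏ i ∈ range k, ((n : R) - i) := by
  induction k with
  | zero => simp
  | succ k ih =>
    rw [descFactorial_succ, cast_mul, prod_range_succ, ← ih, mul_comm]
    rcases le_or_gt k n with hkn | hnk
    · rw [cast_sub hkn]
    · simp [descFactorial_eq_zero_iff_lt.2 hnk]

theorem cast_choose_div_cast_choose_eq_prod {K : Type*} [Field K] [CharZero K] (n N k : ℕ) :
    (n.choose k : K) / N.choose k = ∏ i ∈ range k, ((n : K) - i) / ((N : K) - i) := by
  rw [prod_div_distrib, ← cast_descFactorial_eq_prod_range_s4, ← cast_descFactorial_eq_prod_range_s4,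
    descFactorial_eq_factorial_mul_choose, descFactorial_eq_factorial_mul_choose, cast_mul,
    cast_mul, mul_div_mul_left _ _ (cast_ne_zero.2 k.factorial_ne_zero)]

theorem cast_choose_div_cast_choose_le_pow {n N : ℕ} (k : ℕ) (hnN : n ≤ N) :
    (n.choose k : ℝ) / N.choose k ≤ ((n : ℝ) / N) ^ k := by
  rcases lt_or_ge n k with hnk | hkn
  · rw [choose_eq_zero_of_lt hnk, cast_zero, zero_div]
    positivity
  rw [cast_choose_div_cast_choose_eq_prod, pow_eq_prod_const]
  refine prod_le_prod (fun i hi => ?_) (fun i hi => ?_)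
  all_goals
    have hi : (i : ℝ) + 1 ≤ k := by exact_mod_cast mem_range.1 hi
    have hkn : (k : ℝ) ≤ n := by exact_mod_cast hkn
    have hnN : (n : ℝ) ≤ N := by exact_mod_cast hnN
  · exact div_nonneg (by linarith) (by linarith)
  · rw [div_le_div_iff₀ (by linarith) (by linarith)]
    nlinarith

theorem pow_le_cast_choose_div_cast_choose {n N k : ℕ} (hkn : k ≤ n) (hnN : n ≤ N) :
    (((n : ℝ) - k + 1) / ((N : ℝ) - k + 1)) ^ k ≤ (n.choose k : ℝ) / N.choose k := by
  rw [cast_choose_div_cast_choose_eq_prod, pow_eq_prod_const]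
  have hkn : (k : ℝ) ≤ n := by exact_mod_cast hkn
  have hnN : (n : ℝ) ≤ N := by exact_mod_cast hnN
  refine prod_le_prod (fun i hi => ?_) (fun i hi => ?_)
  · exact div_nonneg (by linarith) (by linarith)
  · have hi : (i : ℝ) + 1 ≤ k := by exact_mod_cast mem_range.1 hi
    rw [div_le_div_iff₀ (by linarith) (by linarith)]
    nlinarith

theorem cast_choose_div_cast_choose_add_one {K : Type*} [Field K] [CharZero K] (n N k : ℕ) :
    (n.choose k : K) / (N + 1).choose (k + 1) = (k + 1) / (N + 1) * (n.choose k / N.choose k) := by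
  have h : ((N + 1).choose (k + 1) : K) * (k + 1) = (N + 1) * N.choose k := by
    exact_mod_cast (add_one_mul_choose_eq N k).symm
  rw [eq_div_of_mul_eq (Nat.cast_add_one_ne_zero k) h]
  field_simp

end Nat

theorem neg_hypergeom_ratio_mem_Icc {B L R : ℕ} (hL : 2 ≤ L) (hR : 1 ≤ R) (hRLB : R + L ≤ B) :
    ((B - R - 1).choose (L - 2) : ℝ) / (B - 1).choose (L - 1) ∈
      Set.Icc ((L - 1 : ℝ) / (B - 1) * (1 - (R - 1 : ℝ) / (B - L + 1)) ^ (L - 2))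
        ((L - 1 : ℝ) / (B - 1) * (1 - (R - 1 : ℝ) / (B - 2)) ^ (L - 2)) := by
  obtain ⟨k, rfl⟩ := Nat.exists_eq_add_of_le' hL
  obtain ⟨d, rfl⟩ := Nat.exists_eq_add_of_le' hR
  obtain ⟨N, rfl⟩ : ∃ N, B = N + 2 := ⟨B - 2, by omega⟩
  rw [show N + 2 - (d + 1) - 1 = N - d by omega, show N + 2 - 1 = N + 1 by omega,
    show k + 2 - 1 = k + 1 by omega, Nat.add_sub_cancel, Nat.cast_choose_div_cast_choose_add_one]
  have hlow := Nat.pow_le_cast_choose_div_cast_choose (n := N - d) (N := N) (k := k)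
    (by omega) (by omega)
  have hup := Nat.cast_choose_div_cast_choose_le_pow (n := N - d) k (Nat.sub_le N d)
  have hdN : d ≤ N := by omega
  have hkN : (k : ℝ) + d + 1 ≤ N := by exact_mod_cast (by omega : k + d + 1 ≤ N)
  push_cast [Nat.cast_sub hdN] at hlow hup ⊢
  have hN : (N : ℝ) ≠ 0 := by linarith
  have hNk : (N : ℝ) - k + 1 ≠ 0 := by linarith
  rw [show (k : ℝ) + 2 - 1 = k + 1 by ring, show (N : ℝ) + 2 - 1 = N + 1 by ring,
    show (d : ℝ) + 1 - 1 = d by ring, show (N : ℝ) + 2 - (k + 2) + 1 = N - k + 1 by ring,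
    show (N : ℝ) + 2 - 2 = N by ring, one_sub_div hN, one_sub_div hNk]
  rw [show (N : ℝ) - k + 1 - d = N - d - k + 1 by ring]
  exact ⟨by gcongr, by gcongr⟩

section Limits

variable {ι : Type*} {F : Filter ι}

theorem tendsto_one_sub_pow_exp_neg_of_tendsto_mul {n : ι → ℕ} {a : ι → ℝ} {x : ℝ}
    (hn : Tendsto n F atTop) (hna : Tendsto (fun i => (n i : ℝ) * a i) F (𝓝 x)) :
    Tendsto (fun i => (1 - a i) ^ n i) F (𝓝 (Real.exp (-x))) := by
  have ha : Tendsto a F (𝓝 0) := by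
    have h := hna.mul (tendsto_natCast_atTop_atTop.comp hn).inv_tendsto_atTop
    rw [mul_zero] at h
    refine h.congr' ?_
    filter_upwards [hn.eventually_ne_atTop 0] with i hi
    simp only [Pi.inv_apply, Function.comp_apply]
    field_simp
  have hpos : ∀ᶠ i in F, 0 < 1 - a i := by
    filter_upwards [ha.eventually (gt_mem_nhds one_pos)] with i hi
    linarith
  have hlog : Tendsto (fun i => (n i : ℝ) * Real.log (1 - a i)) F (𝓝 (-x)) := by
    have hlower : Tendsto (fun i => -((n i : ℝ) * a i) / (1 - a i)) F (𝓝 (-x)) := by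
      have h := hna.neg.div (tendsto_const_nhds.sub ha) (by norm_num : (1 : ℝ) - 0 ≠ 0)
      rwa [sub_zero, div_one] at h
    refine tendsto_of_tendsto_of_tendsto_of_le_of_le' hlower hna.neg ?_ ?_
    · filter_upwards [hpos] with i hi
      calc -((n i : ℝ) * a i) / (1 - a i) = n i * (1 - (1 - a i)⁻¹) := by field_simp; ring
        _ ≤ n i * Real.log (1 - a i) := by
          gcongr
          exact Real.one_sub_inv_le_log_of_pos hi
    · filter_upwards [hpos] with i hi
      calc (n i : ℝ) * Real.log (1 - a i) ≤ n i * (1 - a i - 1) := by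
            gcongr
            exact Real.log_le_sub_one_of_pos hi
        _ = -((n i : ℝ) * a i) := by ring
  refine ((Real.continuous_exp.tendsto _).comp hlog).congr' ?_
  filter_upwards [hpos] with i hi
  rw [Function.comp_apply, Real.exp_nat_mul, Real.exp_log hi]

theorem tendsto_div_of_tendsto_mul_div {u b l : ι → ℝ} {y : ℝ} (hl : Tendsto l F atTop)
    (h : Tendsto (fun i => u i * l i / b i) F (𝓝 y)) :
    Tendsto (fun i => u i / b i) F (𝓝 0) := by
  have h' := h.mul hl.inv_tendsto_atTop
  rw [mul_zero] at h'
  refine h'.congr' ?_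
  filter_upwards [hl.eventually_ne_atTop 0] with i hi
  simp only [Pi.inv_apply]
  field_simp

theorem tendsto_sub_div_self {f : ι → ℝ} (c : ℝ) (hf : Tendsto f F atTop) :
    Tendsto (fun i => (f i - c) / f i) F (𝓝 1) := by
  have h := (tendsto_const_nhds (x := (1 : ℝ))).sub (hf.inv_tendsto_atTop.const_mul c)
  rw [mul_zero, sub_zero] at h
  refine h.congr' ?_
  filter_upwards [hf.eventually_ne_atTop 0] with i hi
  simp only [Pi.inv_apply]
  field_simp

theorem tendsto_div_mul_sub_one_div_sub_one {b l : ι → ℝ} (hb : Tendsto b F atTop)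
    (hl : Tendsto l F atTop) : Tendsto (fun i => b i / l i * ((l i - 1) / (b i - 1))) F (𝓝 1) := by
  have h := (tendsto_sub_div_self 1 hl).div (tendsto_sub_div_self 1 hb) one_ne_zero
  rw [div_one] at h
  refine h.congr' ?_
  filter_upwards [hb.eventually_gt_atTop 1, hl.eventually_ne_atTop 0] with i hb1 hl0
  have hb0 : b i ≠ 0 := by positivity
  have hb1 : b i - 1 ≠ 0 := by linarith
  simp only [Pi.div_apply]
  field_simp

theorem tendsto_sub_mul_sub_div {b l r d : ι → ℝ} {x : ℝ} (p q : ℝ)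
    (hb : Tendsto b F atTop) (hl : Tendsto l F atTop)
    (hlb : Tendsto (fun i => l i / b i) F (𝓝 0))
    (hrlb : Tendsto (fun i => r i * l i / b i) F (𝓝 x))
    (hdb : Tendsto (fun i => d i / b i) F (𝓝 1)) :
    Tendsto (fun i => (l i - p) * ((r i - q) / d i)) F (𝓝 x) := by
  have hrb : Tendsto (fun i => r i / b i) F (𝓝 0) := tendsto_div_of_tendsto_mul_div hl hrlb
  have hnum : Tendsto (fun i => (l i - p) * (r i - q) / b i) F (𝓝 x) := by
    have h := ((hrlb.sub (hlb.const_mul q)).sub (hrb.const_mul p)).add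
      (hb.inv_tendsto_atTop.const_mul (p * q))
    simp only [mul_zero, sub_zero, add_zero] at h
    refine h.congr fun i => ?_
    simp only [Pi.inv_apply]
    ring
  have h := hnum.div hdb one_ne_zero
  rw [div_one] at h
  refine h.congr' ?_
  filter_upwards [hb.eventually_ne_atTop 0] with i hi
  rw [Pi.div_apply, div_div_div_cancel_right₀ hi, mul_div_assoc]

theorem eventually_add_le_of_tendsto {B L R : ι → ℕ} {x : ℝ} (hBpos : ∀ i, 0 < B i)
    (hL : Tendsto (fun i => (L i : ℝ)) F atTop)
    (hLB : Tendsto (fun i => (L i : ℝ) / B i) F (𝓝 0))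
    (hRL : Tendsto (fun i => (R i : ℝ) * L i / B i) F (𝓝 x)) :
    ∀ᶠ i in F, R i + L i ≤ B i := by
  have h := (tendsto_div_of_tendsto_mul_div hL hRL).add hLB
  rw [add_zero] at h
  filter_upwards [h.eventually (gt_mem_nhds one_pos)] with i hi
  rw [← add_div, div_lt_one (Nat.cast_pos.2 (hBpos i))] at hi
  exact_mod_cast hi.le

end Limits

theorem neg_hypergeom_density_limit_exponential_general (x : ℝ) (B L R : ℕ → ℕ)
    (hBpos : ∀ m, 0 < B m) (hRpos : ∀ m, 0 < R m)
    (hLtop : Tendsto L atTop atTop)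
    (hLB : Tendsto (fun m => (L m : ℝ) / (B m : ℝ)) atTop (nhds 0))
    (hRL : Tendsto (fun m => ((R m : ℝ) * (L m : ℝ)) / (B m : ℝ)) atTop (nhds x)) :
    Tendsto (fun m => ((B m : ℝ) / (L m : ℝ)) *
        (((B m - R m - 1).choose (L m - 2) : ℝ) / ((B m - 1).choose (L m - 1) : ℝ)))
      atTop (nhds (Real.exp (-x))) := by
  have hL : Tendsto (fun m => (L m : ℝ)) atTop atTop := tendsto_natCast_atTop_atTop.comp hLtop
  have hRLB := eventually_add_le_of_tendsto hBpos hL hLB hRL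
  have hL2 := hLtop.eventually_ge_atTop 2
  have hB : Tendsto (fun m => (B m : ℝ)) atTop atTop := tendsto_atTop_mono' _
    (by filter_upwards [hRLB] with m hm; exact_mod_cast (by omega : L m ≤ B m)) hL
  have hexp {d : ℕ → ℝ} (hd : Tendsto (fun m => d m / B m) atTop (𝓝 1)) :
      Tendsto (fun m => (1 - (R m - 1 : ℝ) / d m) ^ (L m - 2)) atTop (𝓝 (Real.exp (-x))) := by
    refine tendsto_one_sub_pow_exp_neg_of_tendsto_mul ((tendsto_sub_atTop_nat 2).comp hLtop)
      ((tendsto_sub_mul_sub_div 2 1 hB hL hLB hRL hd).congr' ?_)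
    filter_upwards [hL2] with m hm
    rw [Nat.cast_sub hm, Nat.cast_ofNat]
  have hdlow : Tendsto (fun m => ((B m : ℝ) - L m + 1) / B m) atTop (𝓝 1) := by
    have h := (tendsto_const_nhds (x := (1 : ℝ))).sub hLB |>.add hB.inv_tendsto_atTop
    rw [sub_zero, add_zero] at h
    refine h.congr' ?_
    filter_upwards [hB.eventually_ne_atTop 0] with m hB0
    simp only [Pi.inv_apply]
    field_simp
  have hpre := tendsto_div_mul_sub_one_div_sub_one hB hL
  refine tendsto_of_tendsto_of_tendsto_of_le_of_le' (by simpa using hpre.mul (hexp hdlow))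
    (by simpa using hpre.mul (hexp (tendsto_sub_div_self 2 hB))) ?_ ?_
  all_goals
    filter_upwards [hL2, hRLB] with m hm2 hm
    obtain ⟨hlow, hup⟩ := neg_hypergeom_ratio_mem_Icc hm2 (hRpos m) hm
    rw [mul_assoc]
    gcongr

/-- Case `κ = 0`, `L → ∞` of the limiting distribution of the scaled number of mutant
blocks: if `L_m → ∞`, `L_m / B_m → 0` and `R_m · L_m / B_m → x` with `x ≥ 0`, then
`(B_m/L_m) · C(B_m - R_m - 1, L_m - 2) / C(B_m - 1, L_m - 1) → e^(-x)`. -/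
theorem neg_hypergeom_density_limit_exponential (x : ℝ) (hx : 0 ≤ x) (B L R : ℕ → ℕ)
    (hBpos : ∀ m, 0 < B m) (hLpos : ∀ m, 0 < L m) (hRpos : ∀ m, 0 < R m)
    (hLtop : Tendsto L atTop atTop)
    (hLB : Tendsto (fun m => (L m : ℝ) / (B m : ℝ)) atTop (nhds 0))
    (hRL : Tendsto (fun m => ((R m : ℝ) * (L m : ℝ)) / (B m : ℝ)) atTop (nhds x)) :
    Tendsto (fun m => ((B m : ℝ) / (L m : ℝ)) *
        (((B m - R m - 1).choose (L m - 2) : ℝ) / ((B m - 1).choose (L m - 1) : ℝ)))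
      atTop (nhds (Real.exp (-x))) :=
  neg_hypergeom_density_limit_exponential_general x B L R hBpos hRpos hLtop hLB hRL
end
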